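/- arXiv:2104.11121 — 4 statements merged into one kernel-verified Lean document; each statement's English description precedes it below -/
import Mathlib

section
/- Two signed graphs on the same underlying simple graph are switching equivalent if and only if they have the same set of balanced cycles. -/
open SimpleGraph

/-- Switching a vertex `v`: the sign of every edge incident to `v` is negated. -/
def switchOne {V : Type*} [DecidableEq V] {G : SimpleGraph V} (v : V)
    (σ : G.edgeSet → Bool) : G.edgeSet → Bool :=
  fun e => if v ∈ (e : Sym2 V) then !(σ e) else σ e

/-- Two signatures on the same underlying graph are switching equivalent if one
can be obtained from the other by a sequence of vertex switches. -/
def SwitchEquiv {V : Type*} [DecidableEq V] {G : SimpleGraph V}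
    (σ₁ σ₂ : G.edgeSet → Bool) : Prop :=
  Relation.ReflTransGen (fun τ τ' => ∃ v : V, τ' = switchOne v τ) σ₁ σ₂

/-- The number of negative edges of a walk, counted with multiplicity. -/
def negCount {V : Type*} (G : SimpleGraph V) (σ : G.edgeSet → Bool)
    {a b : V} (w : G.Walk a b) : ℕ :=
  (w.darts.map (fun d => σ ⟨d.edge, d.edge_mem⟩)).count false

/-!
Record a signature by the indicator of its negative edges, a 1-cochain over `ZMod 2`. Switching
at `v` adds the coboundary of the indicator function of `v`, so two signatures are switching
equivalent iff their sum is a coboundary `δf` (switch at the vertices where `f = 1`), and the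
parity of the number of negative edges of a walk is the sum of the cochain along it.

A cochain is a coboundary iff it sums to zero along every closed walk: choose a root in each
component and let `f v` be the sum along any walk from the root to `v`. Over `ZMod 2`, summing to
zero on cycles already implies this for closed walks, since `Walk.bypass` only cuts out closed
detours made of an edge followed by a path, which are cycles or an edge traversed twice.
-/

namespace SimpleGraph

variable {V : Type*} {G : SimpleGraph V}

/-- Over `ZMod 2`, `f u + f v = f v - f u`, so this is the coboundary of `f`, whatever the
orientation of the edge. -/
def coboundary (G : SimpleGraph V) (f : V → ZMod 2) : G.edgeSet → ZMod 2 :=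
  fun e => Sym2.lift ⟨fun u v => f u + f v, fun _ _ => add_comm _ _⟩ e

@[simp]
lemma coboundary_mk (f : V → ZMod 2) {u v : V} (h : G.Adj u v) :
    G.coboundary f ⟨s(u, v), h⟩ = f u + f v := rfl

lemma coboundary_add (f g : V → ZMod 2) :
    G.coboundary (f + g) = G.coboundary f + G.coboundary g := by
  funext ⟨e, he⟩
  induction e using Sym2.ind
  exact add_add_add_comm _ _ _ _

lemma coboundary_zero : G.coboundary 0 = 0 := by
  funext ⟨e, he⟩
  induction e using Sym2.ind
  exact add_zero 0

lemma apply_edge_swap {M : Type*} (δ : G.edgeSet → M) {u v : V} (h : G.Adj u v) :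
    δ ⟨s(v, u), h.symm⟩ = δ ⟨s(u, v), h⟩ :=
  congrArg δ (Subtype.ext Sym2.eq_swap)

namespace Walk

variable {M : Type*} [AddCommMonoid M]

def sumEdges (δ : G.edgeSet → M) {u v : V} (p : G.Walk u v) : M :=
  (p.darts.map fun d => δ ⟨d.edge, d.edge_mem⟩).sum

variable (δ : G.edgeSet → M)

@[simp]
lemma sumEdges_nil {u : V} : (nil : G.Walk u u).sumEdges δ = 0 := rfl

@[simp]
lemma sumEdges_cons {u v w : V} (h : G.Adj u v) (p : G.Walk v w) :
    (cons h p).sumEdges δ = δ ⟨s(u, v), h⟩ + p.sumEdges δ := by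
  simp [sumEdges, Dart.edge]

@[simp]
lemma sumEdges_append {u v w : V} (p : G.Walk u v) (q : G.Walk v w) :
    (p.append q).sumEdges δ = p.sumEdges δ + q.sumEdges δ := by
  simp [sumEdges]

@[simp]
lemma sumEdges_copy {u v u' v' : V} (p : G.Walk u v) (hu : u = u') (hv : v = v') :
    (p.copy hu hv).sumEdges δ = p.sumEdges δ := by
  subst hu hv
  rfl

@[simp]
lemma sumEdges_reverse {u v : V} (p : G.Walk u v) : p.reverse.sumEdges δ = p.sumEdges δ := by
  induction p with
  | nil => rfl
  | cons h p ih =>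
    rw [reverse_cons, sumEdges_append, ih, sumEdges_cons, sumEdges_cons, sumEdges_nil, add_zero,
      add_comm, apply_edge_swap δ h]

lemma sumEdges_add (δ' : G.edgeSet → M) {u v : V} (p : G.Walk u v) :
    p.sumEdges (δ + δ') = p.sumEdges δ + p.sumEdges δ' := by
  induction p with
  | nil => simp
  | cons h p ih => simp only [sumEdges_cons, ih, Pi.add_apply]; abel

lemma sumEdges_coboundary (f : V → ZMod 2) {u v : V} (p : G.Walk u v) :
    p.sumEdges (G.coboundary f) = f u + f v := by
  induction p with
  | nil => exact (CharTwo.add_self_eq_zero _).symm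
  | cons h p ih =>
    rw [sumEdges_cons, ih, coboundary_mk]
    grind

variable {δ : G.edgeSet → ZMod 2}

lemma sumEdges_cons_eq_zero_of_isPath
    (hδ : ∀ (a : V) (c : G.Walk a a), c.IsCycle → c.sumEdges δ = 0)
    {u v : V} (h : G.Adj u v) {p : G.Walk v u} (hp : p.IsPath) : (cons h p).sumEdges δ = 0 := by
  by_cases he : s(u, v) ∈ p.edges
  · rw [hp.eq_adj_toWalk_of_mem_edges (Sym2.eq_swap ▸ he), Adj.toWalk, sumEdges_cons,
      sumEdges_cons, sumEdges_nil, add_zero, apply_edge_swap δ h, CharTwo.add_self_eq_zero]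
  · exact hδ u _ (cons_isCycle_iff p h |>.mpr ⟨hp, he⟩)

lemma sumEdges_bypass [DecidableEq V]
    (hδ : ∀ (a : V) (c : G.Walk a a), c.IsCycle → c.sumEdges δ = 0)
    {u v : V} (p : G.Walk u v) : p.bypass.sumEdges δ = p.sumEdges δ := by
  induction p with
  | nil => rfl
  | cons h p ih =>
    simp only [bypass]
    split_ifs with hs
    · have hloop := sumEdges_cons_eq_zero_of_isPath hδ h (p.bypass_isPath.takeUntil hs)
      have hsplit := congrArg (sumEdges δ) (p.bypass.take_spec hs)
      rw [sumEdges_cons] at hloop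
      rw [sumEdges_append] at hsplit
      rw [sumEdges_cons, ← ih, ← hsplit]
      grind
    · rw [sumEdges_cons, sumEdges_cons, ih]

lemma sumEdges_eq_zero_of_forall_isCycle
    (hδ : ∀ (a : V) (c : G.Walk a a), c.IsCycle → c.sumEdges δ = 0) {a : V} (c : G.Walk a a) :
    c.sumEdges δ = 0 := by
  classical
  rw [← sumEdges_bypass hδ, (isPath_iff_nil.mp c.bypass_isPath).eq_nil, sumEdges_nil]

lemma sumEdges_eq_of_forall_closed (hδ : ∀ (a : V) (c : G.Walk a a), c.sumEdges δ = 0)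
    {u v : V} (p q : G.Walk u v) : p.sumEdges δ = q.sumEdges δ := by
  have hpq := hδ u (p.append q.reverse)
  rw [sumEdges_append, sumEdges_reverse] at hpq
  grind

end Walk

open Walk in
theorem exists_eq_coboundary_iff {δ : G.edgeSet → ZMod 2} :
    (∃ f, δ = G.coboundary f) ↔ ∀ (a : V) (c : G.Walk a a), c.IsCycle → c.sumEdges δ = 0 := by
  refine ⟨?_, fun hδ => ?_⟩
  · rintro ⟨f, rfl⟩ a c -
    rw [sumEdges_coboundary, CharTwo.add_self_eq_zero]
  have hclosed := fun a (c : G.Walk a a) => sumEdges_eq_zero_of_forall_isCycle hδ c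
  have hroot (v : V) : G.Reachable (G.connectedComponentMk v).out v :=
    ConnectedComponent.exact (Quot.out_eq _)
  refine ⟨fun v => (hroot v).some.sumEdges δ, ?_⟩
  funext ⟨e, he⟩
  induction e using Sym2.ind with | _ u v
  have hadj : G.Adj u v := he
  have hsame : (G.connectedComponentMk u).out = (G.connectedComponentMk v).out := by
    rw [ConnectedComponent.connectedComponentMk_eq_of_adj hadj]
  have hpath := sumEdges_eq_of_forall_closed hclosed
    (((hroot u).some.concat hadj).copy hsame rfl) (hroot v).some
  rw [sumEdges_copy, concat_eq_append, sumEdges_append, sumEdges_cons, sumEdges_nil] at hpath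
  rw [coboundary_mk _ hadj, ← hpath]
  grind

end SimpleGraph

section Signature

variable {V : Type*} {G : SimpleGraph V}

def negIndicator (σ : G.edgeSet → Bool) : G.edgeSet → ZMod 2 :=
  fun e => if σ e then 0 else 1

lemma negIndicator_injective : Function.Injective (negIndicator (G := G)) := by
  intro σ τ h
  funext e
  have key : ∀ x y : Bool, ((if x then 0 else 1 : ZMod 2) = if y then 0 else 1) → x = y := by
    decide
  exact key _ _ (congrFun h e)

lemma cast_count_false (l : List Bool) :
    (l.count false : ZMod 2) = (l.map fun b => if b then 0 else 1).sum := by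
  induction l with
  | nil => rfl
  | cons b l ih => cases b <;> simp [ih, add_comm]

lemma cast_negCount (σ : G.edgeSet → Bool) {a b : V} (w : G.Walk a b) :
    (negCount G σ w : ZMod 2) = w.sumEdges (negIndicator σ) := by
  rw [negCount, cast_count_false, List.map_map]
  rfl

lemma even_negCount_iff (σ : G.edgeSet → Bool) {a b : V} (w : G.Walk a b) :
    Even (negCount G σ w) ↔ w.sumEdges (negIndicator σ) = 0 := by
  rw [← ZMod.natCast_eq_zero_iff_even, cast_negCount]

variable [DecidableEq V]

lemma negIndicator_switchOne (v : V) (σ : G.edgeSet → Bool) :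
    negIndicator (switchOne v σ) = negIndicator σ + G.coboundary (Pi.single v 1) := by
  funext ⟨e, he⟩
  induction e using Sym2.ind with | _ a b
  have hab : a ≠ b := G.ne_of_adj he
  unfold negIndicator switchOne
  simp only [Pi.add_apply, coboundary_mk _ (show G.Adj a b from he), Sym2.mem_iff, Pi.single_apply]
  cases σ ⟨s(a, b), he⟩ <;> split_ifs <;> grind

lemma exists_switchEquiv_add_coboundary_single (σ : G.edgeSet → Bool) (v : V) (c : ZMod 2) :
    ∃ τ, SwitchEquiv σ τ ∧ negIndicator τ = negIndicator σ + G.coboundary (Pi.single v c) := by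
  obtain rfl | rfl := (by decide : ∀ c : ZMod 2, c = 0 ∨ c = 1) c
  · exact ⟨σ, .refl, by simp [coboundary_zero]⟩
  · exact ⟨switchOne v σ, .single ⟨v, rfl⟩, negIndicator_switchOne v σ⟩

lemma exists_switchEquiv_add_coboundary [Fintype V] (σ : G.edgeSet → Bool) (f : V → ZMod 2) :
    ∃ τ, SwitchEquiv σ τ ∧ negIndicator τ = negIndicator σ + G.coboundary f := by
  rw [← Finset.univ_sum_single f]
  induction (Finset.univ : Finset V) using Finset.induction_on with
  | empty => exact ⟨σ, .refl, by simp [coboundary_zero]⟩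
  | insert a s has ih =>
    obtain ⟨τ, hστ, hτ⟩ := ih
    obtain ⟨τ', hττ', hτ'⟩ := exists_switchEquiv_add_coboundary_single τ a (f a)
    refine ⟨τ', hστ.trans hττ', ?_⟩
    rw [hτ', hτ, Finset.sum_insert has, coboundary_add, add_assoc, add_comm (G.coboundary _)]

theorem switchEquiv_iff_exists_coboundary [Fintype V] {σ₁ σ₂ : G.edgeSet → Bool} :
    SwitchEquiv σ₁ σ₂ ↔ ∃ f, negIndicator σ₁ + negIndicator σ₂ = G.coboundary f := by
  refine ⟨fun h => ?_, fun ⟨f, hf⟩ => ?_⟩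
  · induction h with
    | refl => exact ⟨0, funext fun e => by rw [coboundary_zero]; exact CharTwo.add_self_eq_zero _⟩
    | tail _ hstep ih =>
      obtain ⟨v, rfl⟩ := hstep
      obtain ⟨f, hf⟩ := ih
      exact ⟨f + Pi.single v 1, by rw [negIndicator_switchOne, ← add_assoc, hf, coboundary_add]⟩
  · obtain ⟨τ, hτ, hτσ⟩ := exists_switchEquiv_add_coboundary σ₁ f
    have hτσ₂ : negIndicator τ = negIndicator σ₂ := by
      rw [hτσ, ← hf]
      exact funext fun e => CharTwo.add_cancel_left _ _
    rwa [← negIndicator_injective hτσ₂]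

end Signature

/-- Zaslavsky's theorem: two signed graphs on the same underlying simple graph
are switching equivalent if and only if they have the same set of balanced
cycles. -/
theorem switchEquiv_iff_same_balanced_cycles {V : Type*} [Fintype V]
    [DecidableEq V] (G : SimpleGraph V) (σ₁ σ₂ : G.edgeSet → Bool) :
    SwitchEquiv σ₁ σ₂ ↔
      ∀ (a : V) (w : G.Walk a a), w.IsCycle →
        (Even (negCount G σ₁ w) ↔ Even (negCount G σ₂ w)) := by
  have hparity : ∀ x y : ZMod 2, (x = 0 ↔ y = 0) ↔ x + y = 0 := by decide
  rw [switchEquiv_iff_exists_coboundary, exists_eq_coboundary_iff]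
  simp only [even_negCount_iff, hparity, Walk.sumEdges_add]
end

section
/- For signed graphs G and H: G admits a (switching) homomorphism to H if and only if G admits a sign-preserving homomorphism to the antitwinned graph ρ(H). -/
open SimpleGraph

theorem Bool.beq_eq_iff_eq_beq (a b c : Bool) : (a == b) = c ↔ b = (a == c) := by
  cases a <;> cases b <;> cases c <;> decide

/-- For signed graphs `G` and `H`: `G` admits a switching homomorphism to `H`
(i.e. a sign-preserving homomorphism after switching a set of vertices of `G`)
if and only if `G` admits a sign-preserving homomorphism to the antitwinned
graph `ρ(H)` on `V(H) × Bool`, whose edges `u^i v^j` have sign `i·j·s(uv)`. -/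
theorem hom_iff_spHom_rho {VG VH : Type*} (G : SimpleGraph VG)
    (σG : VG → VG → Bool) (H : SimpleGraph VH) (σH : VH → VH → Bool) :
    (∃ (f : VG → Bool) (φ : VG → VH), ∀ u v, G.Adj u v →
        H.Adj (φ u) (φ v) ∧ σH (φ u) (φ v) = ((f u == f v) == σG u v)) ↔
    (∃ ψ : VG → VH × Bool, ∀ u v, G.Adj u v →
        H.Adj (ψ u).1 (ψ v).1 ∧
          (((ψ u).2 == (ψ v).2) == σH (ψ u).1 (ψ v).1) = σG u v) := by
  -- The switching `f` and the map `φ` combine into `ψ v = (φ v, f v)`: a vertex goes to the copy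
  -- of its image selected by its switching bit, and on each edge the two sign conditions agree.
  constructor
  · rintro ⟨f, φ, h⟩
    exact ⟨fun v => (φ v, f v), fun u v huv =>
      ⟨(h u v huv).1, (Bool.beq_eq_iff_eq_beq _ _ _).2 (h u v huv).2⟩⟩
  · rintro ⟨ψ, h⟩
    exact ⟨fun v => (ψ v).2, fun v => (ψ v).1, fun u v huv =>
      ⟨(h u v huv).1, (Bool.beq_eq_iff_eq_beq _ _ _).1 (h u v huv).2⟩⟩
end

section
/- There is no upper bound on the sign-preserving chromatic number of signed graphs with average degree less than 4: for every n ≥ 2, the signed graph obtained from K_n by subdividing each edge into a 2-path with one positive and one negative edge has average degree 2n(n−1)/(n + n(n−1)/2) < 4 and sign-preserving chromatic number at least n. -/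
open SimpleGraph

/-- Vertices of the subdivided complete graph: the `n` branch vertices `v_i`
together with one subdivision vertex `u_{ij}` for each pair `i < j`. -/
abbrev SubKVert (n : ℕ) := Fin n ⊕ {p : Fin n × Fin n // p.1 < p.2}

/-- The graph obtained from `K_n` by subdividing every edge once. -/
def subKAdj (n : ℕ) : SimpleGraph (SubKVert n) where
  Adj x y :=
    match x, y with
    | Sum.inl i, Sum.inr p => i = p.val.1 ∨ i = p.val.2
    | Sum.inr p, Sum.inl i => i = p.val.1 ∨ i = p.val.2
    | _, _ => False
  symm := ⟨by intro x y h; cases x <;> cases y <;> simp_all⟩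
  loopless := ⟨by intro x h; cases x <;> simp_all⟩

/-- The signature: on each subdivided edge `v_i u_{ij} v_j` (`i < j`), the edge
`v_i u_{ij}` is positive and `u_{ij} v_j` is negative. -/
def subKSign (n : ℕ) : SubKVert n → SubKVert n → Bool
  | Sum.inl i, Sum.inr p => decide (i = p.val.1)
  | Sum.inr p, Sum.inl i => decide (i = p.val.1)
  | _, _ => true

/-! Every edge joins a branch vertex to a subdivision vertex, and each of the `C(n,2)` subdivision
vertices has degree 2, so there are `2·C(n,2)` edges on `n + C(n,2)` vertices: the average degree
is below 4. If a sign-preserving map identified `v_i` and `v_j` (`i < j`), it would send the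
positive edge `v_i u_{ij}` and the negative edge `v_j u_{ij}` to the same edge of the target. -/

lemma card_subKVert (n : ℕ) : Fintype.card (SubKVert n) = n + n.choose 2 := by
  rw [Fintype.card_sum, Fintype.card_fin, Fintype.card_subtype, Fintype.card_product_filter_lt,
    Fintype.card_fin]

lemma subKAdj_isBipartiteWith (n : ℕ) :
    (subKAdj n).IsBipartiteWith ↑(Finset.univ.map (.inl : Fin n ↪ SubKVert n))
      ↑(Finset.univ.map (.inr : _ ↪ SubKVert n)) where
  disjoint := by simpa using Set.isCompl_range_inl_range_inr.disjoint
  mem_of_adj := by rintro (i | p) (j | q) h <;> simp_all [subKAdj]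

lemma subKAdj_neighborSet_inr (n : ℕ) (p : {p : Fin n × Fin n // p.1 < p.2}) :
    (subKAdj n).neighborSet (.inr p) = {.inl p.1.1, .inl p.1.2} := by
  ext (i | q) <;> simp [subKAdj, eq_comm]

lemma subKAdj_degree_inr (n : ℕ) (p : {p : Fin n × Fin n // p.1 < p.2})
    [Fintype ((subKAdj n).neighborSet (.inr p))] : (subKAdj n).degree (.inr p) = 2 := by
  rw [← card_neighborSet_eq_degree, ← Nat.card_eq_fintype_card, Nat.card_coe_set_eq,
    subKAdj_neighborSet_inr, Set.ncard_pair (by simpa using p.2.ne)]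

lemma ncard_edgeSet_subKAdj (n : ℕ) : (subKAdj n).edgeSet.ncard = 2 * n.choose 2 := by
  classical
  rw [← coe_edgeFinset, Set.ncard_coe_finset,
    ← isBipartiteWith_sum_degrees_eq_card_edges' (subKAdj_isBipartiteWith n)]
  have hdeg : ∀ v ∈ Finset.univ.map (.inr : _ ↪ SubKVert n), (subKAdj n).degree v = 2 := by
    simp only [Finset.mem_map, Finset.mem_univ, true_and]
    rintro _ ⟨p, rfl⟩
    exact subKAdj_degree_inr n p
  rw [Finset.sum_const_nat hdeg, Finset.card_map, Finset.card_univ, Fintype.card_subtype,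
    Fintype.card_product_filter_lt, Fintype.card_fin, mul_comm]

theorem injective_comp_inl_of_preserves_subKSign {β : Type*} (σ : β → β → Bool) {n : ℕ}
    {φ : SubKVert n → β} (hφ : ∀ u v, (subKAdj n).Adj u v → σ (φ u) (φ v) = subKSign n u v) :
    Function.Injective (φ ∘ Sum.inl) := by
  intro i j hij
  by_contra hne
  wlog hlt : i < j generalizing i j
  · exact this hij.symm (Ne.symm hne) (lt_of_le_of_ne (not_lt.1 hlt) (Ne.symm hne))
  have hpos := hφ (.inl i) (.inr ⟨(i, j), hlt⟩) (Or.inl rfl)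
  have hneg := hφ (.inl j) (.inr ⟨(i, j), hlt⟩) (Or.inr rfl)
  simp only [Function.comp_apply] at hij
  simp [subKSign, hij, hneg, Ne.symm hne] at hpos

lemma two_mul_div_lt_four_of_lt_two_mul {e v : ℕ} (h : e < 2 * v) : (2 * e : ℚ) / v < 4 := by
  rw [div_lt_iff₀ (by exact_mod_cast (show 0 < v by omega))]
  exact_mod_cast (show 2 * e < 4 * v by omega)

theorem spChromatic_unbounded_below_mad_four_general (n : ℕ) :
    (subKAdj n).edgeSet.ncard = n * (n - 1) ∧
    Fintype.card (SubKVert n) = n + n * (n - 1) / 2 ∧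
    (2 * ((subKAdj n).edgeSet.ncard : ℚ)) / (Fintype.card (SubKVert n) : ℚ) < 4 ∧
    ∀ (m : ℕ) (H : SimpleGraph (Fin m)) (σH : Fin m → Fin m → Bool)
      (φ : SubKVert n → Fin m),
      (∀ u v, (subKAdj n).Adj u v →
        H.Adj (φ u) (φ v) ∧ σH (φ u) (φ v) = subKSign n u v) →
      n ≤ m := by
  refine ⟨?_, ?_, ?_, fun m H σH φ hφ ↦ ?_⟩
  · rw [ncard_edgeSet_subKAdj, Nat.choose_two_right,
      Nat.mul_div_cancel' (Nat.even_mul_pred_self n).two_dvd]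
  · rw [card_subKVert, Nat.choose_two_right]
  · rw [ncard_edgeSet_subKAdj, card_subKVert]
    rcases n.eq_zero_or_pos with rfl | hn
    · simp
    · exact two_mul_div_lt_four_of_lt_two_mul (by omega)
  · simpa using Fintype.card_le_of_injective _
      (injective_comp_inl_of_preserves_subKSign σH fun u v huv ↦ (hφ u v huv).2)

/-- Signed graphs of average degree less than `4` have unbounded
sign-preserving chromatic number: for every `n ≥ 2`, the signed graph obtained
from `K_n` by subdividing each edge into a path with one positive and one
negative edge has `n(n-1)` edges, `n + n(n-1)/2` vertices, average degree
`2·n(n-1)/(n + n(n-1)/2) < 4`, and admits no sign-preserving homomorphism to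
any signed graph on fewer than `n` vertices. -/
theorem spChromatic_unbounded_below_mad_four (n : ℕ) (hn : 2 ≤ n) :
    (subKAdj n).edgeSet.ncard = n * (n - 1) ∧
    Fintype.card (SubKVert n) = n + n * (n - 1) / 2 ∧
    (2 * ((subKAdj n).edgeSet.ncard : ℚ)) / (Fintype.card (SubKVert n) : ℚ) < 4 ∧
    ∀ (m : ℕ) (H : SimpleGraph (Fin m)) (σH : Fin m → Fin m → Bool)
      (φ : SubKVert n → Fin m),
      (∀ u v, (subKAdj n).Adj u v →
        H.Adj (φ u) (φ v) ∧ σH (φ u) (φ v) = subKSign n u v) →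
      n ≤ m :=
  spChromatic_unbounded_below_mad_four_general n
end

section
/- In the signed Paley graph SP_9 on F_9, for every ordered pair of distinct vertices (u,v) and every pair of signs (α,β) ∈ {−1,+1}², there exists at least one vertex w distinct from u and v with s(uw) = α and s(vw) = β; i.e., SP_9 has property P_{2,1}. -/
/-!
Put `d = v - u` and look for `w = u - c * d`, so that `u - w = c * d` and `v - w = (c + 1) * d`.
Squareness of nonzero elements of a finite field is multiplicative (the quadratic character), so
it suffices that all four square/non-square patterns of `(c, c + 1)` occur with `c ≠ 0, -1`.
In `F_9`, where `3 = 0` and `i ^ 2 = -1` for some `i`, the nonzero squares are the fourth roots of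
unity `±1, ±i`, and `c = 1, i, i - 1, i + 1` realise the four patterns.
-/

namespace FiniteField

variable {F : Type*} [Field F] [Fintype F]

theorem isSquare_mul_iff {x y : F} (hx : x ≠ 0) (hy : y ≠ 0) :
    IsSquare (x * y) ↔ (IsSquare x ↔ IsSquare y) := by
  classical
  rw [← quadraticChar_one_iff_isSquare hx, ← quadraticChar_one_iff_isSquare hy,
    ← quadraticChar_one_iff_isSquare (mul_ne_zero hx hy), map_mul]
  rcases quadraticChar_dichotomy hx with h | h <;>
    rcases quadraticChar_dichotomy hy with h' | h' <;> simp [h, h']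

theorem exists_isSquare_sub_iff_of_forall_exists_isSquare_iff
    (h : ∀ p q : Prop, ∃ c : F, c ≠ 0 ∧ c ≠ -1 ∧ (IsSquare c ↔ p) ∧ (IsSquare (c + 1) ↔ q))
    {u v : F} (huv : u ≠ v) (p q : Prop) :
    ∃ w : F, w ≠ u ∧ w ≠ v ∧ (IsSquare (u - w) ↔ p) ∧ (IsSquare (v - w) ↔ q) := by
  have hd : v - u ≠ 0 := sub_ne_zero.mpr huv.symm
  obtain ⟨c, hc, hc', hcp, hcq⟩ := h (IsSquare (v - u) ↔ p) (IsSquare (v - u) ↔ q)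
  have hc₁ : c + 1 ≠ 0 := fun h => hc' (eq_neg_of_add_eq_zero_left h)
  refine ⟨u - c * (v - u), ?_, ?_, ?_, ?_⟩
  · simpa [sub_eq_self] using mul_ne_zero hc hd
  · intro h
    exact mul_ne_zero hc₁ hd (by linear_combination -h)
  · rw [show u - (u - c * (v - u)) = c * (v - u) by ring, isSquare_mul_iff hc hd]
    tauto
  · rw [show v - (u - c * (v - u)) = (c + 1) * (v - u) by ring,
      isSquare_mul_iff hc₁ hd]
    tauto

theorem ringChar_ne_two_of_card_eq_nine (hF : Fintype.card F = 9) : ringChar F ≠ 2 := by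
  intro h
  simpa [hF] using even_card_of_char_two h

theorem three_eq_zero_of_card_eq_nine (hF : Fintype.card F = 9) : (3 : F) = 0 := by
  have h9 : ((Fintype.card F : ℕ) : F) = 0 := cast_card_eq_zero F
  rw [hF] at h9
  exact mul_self_eq_zero.mp (by linear_combination h9)

theorem exists_sq_eq_neg_one_of_card_eq_nine (hF : Fintype.card F = 9) : ∃ i : F, i ^ 2 = -1 := by
  obtain ⟨i, hi⟩ : IsSquare (-1 : F) := by
    rw [isSquare_neg_one_iff, hF]
    decide
  exact ⟨i, by rw [hi, sq]⟩

theorem isSquare_iff_pow_four_eq_one_of_card_eq_nine (hF : Fintype.card F = 9) {x : F}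
    (hx : x ≠ 0) : IsSquare x ↔ x ^ 4 = 1 := by
  simpa [hF] using isSquare_iff (ringChar_ne_two_of_card_eq_nine hF) hx

theorem ne_zero_and_isSquare_iff_of_pow_four_of_card_eq_nine (hF : Fintype.card F = 9) {x : F}
    {r : Prop} (h : x ^ 4 = 1 ∧ r ∨ x ^ 4 = -1 ∧ ¬r) : x ≠ 0 ∧ (IsSquare x ↔ r) := by
  have hx : x ≠ 0 := by
    rintro rfl
    rcases h with ⟨h, -⟩ | ⟨h, -⟩ <;> norm_num at h
  refine ⟨hx, ?_⟩
  rw [isSquare_iff_pow_four_eq_one_of_card_eq_nine hF hx]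
  rcases h with ⟨h, hr⟩ | ⟨h, hr⟩
  · simp [h, hr]
  · simp [h, hr, Ring.neg_one_ne_one_of_char_ne_two (ringChar_ne_two_of_card_eq_nine hF)]

theorem exists_isSquare_iff_and_isSquare_add_one_iff_of_card_eq_nine
    (hF : Fintype.card F = 9) (p q : Prop) :
    ∃ c : F, c ≠ 0 ∧ c ≠ -1 ∧ (IsSquare c ↔ p) ∧ (IsSquare (c + 1) ↔ q) := by
  suffices ∃ c : F, (c ^ 4 = 1 ∧ p ∨ c ^ 4 = -1 ∧ ¬p) ∧
      ((c + 1) ^ 4 = 1 ∧ q ∨ (c + 1) ^ 4 = -1 ∧ ¬q) by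
    obtain ⟨c, hc, hc₁⟩ := this
    obtain ⟨hcne, hcp⟩ := ne_zero_and_isSquare_iff_of_pow_four_of_card_eq_nine hF hc
    obtain ⟨hc₁ne, hcq⟩ := ne_zero_and_isSquare_iff_of_pow_four_of_card_eq_nine hF hc₁
    exact ⟨c, hcne, fun h => hc₁ne (by rw [h, neg_add_cancel]), hcp, hcq⟩
  obtain ⟨i, hi⟩ := exists_sq_eq_neg_one_of_card_eq_nine hF
  have h3 := three_eq_zero_of_card_eq_nine hF
  have h2 : ((1 : F) + 1) ^ 4 = 1 := by linear_combination 5 * h3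
  have hi4 : i ^ 4 = 1 := by linear_combination (i ^ 2 - 1) * hi
  have hi4' : (i - 1 + 1) ^ 4 = 1 := by linear_combination (i ^ 2 - 1) * hi
  have hip : (i + 1) ^ 4 = -1 := by linear_combination (i ^ 2 + 4 * i + 5) * hi - h3
  have him : (i - 1) ^ 4 = -1 := by linear_combination (i ^ 2 - 4 * i + 5) * hi - h3
  have hip' : (i + 1 + 1) ^ 4 = -1 := by
    linear_combination (i ^ 2 + 8 * i + 23) * hi + (8 * i - 2) * h3
  by_cases hp : p <;> by_cases hq : q
  · exact ⟨1, .inl ⟨one_pow 4, hp⟩, .inl ⟨h2, hq⟩⟩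
  · exact ⟨i, .inl ⟨hi4, hp⟩, .inr ⟨hip, hq⟩⟩
  · exact ⟨i - 1, .inr ⟨him, hp⟩, .inl ⟨hi4', hq⟩⟩
  · exact ⟨i + 1, .inr ⟨hip, hp⟩, .inr ⟨hip', hq⟩⟩

end FiniteField

/-- The signed Paley graph `SP_9` has property `P_{2,1}`: for every ordered
pair of distinct vertices `(u,v)` of `F_9` and every pair of signs, there is a
vertex `w` distinct from `u` and `v` such that `u - w` is a nonzero square iff
the first sign is positive, and `v - w` is a nonzero square iff the second sign
is positive. -/
theorem signedPaley9_P21 {F : Type*} [Field F] [Fintype F]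
    (hF : Fintype.card F = 9) (u v : F) (huv : u ≠ v) (α β : Bool) :
    ∃ w : F, w ≠ u ∧ w ≠ v ∧
      (IsSquare (u - w) ↔ α = true) ∧ (IsSquare (v - w) ↔ β = true) :=
  FiniteField.exists_isSquare_sub_iff_of_forall_exists_isSquare_iff
    (FiniteField.exists_isSquare_iff_and_isSquare_add_one_iff_of_card_eq_nine hF) huv _ _
end
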